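/- Let S=T_1,…,T_{|𝕋|} be a schedule of a trip network (D,𝕋) and let P be a temporal path in the induced temporal graph G[D,𝕋,τ_S]. Then edges of different trips cannot be interleaved along P: for each trip, the edges of P induced by that trip occur consecutively in P, and if an edge of P induced by T_i occurs before an edge of P induced by T_j with i≠j, then i<j (i.e., the trips appear along P in blocks, in the order given by S). -/

import Mathlib

/-- A weighted directed edge of a weighted directed multigraph. -/
structure DEdge (V : Type) where
  tail : V
  head : V
  weight : ℝ

/-- A temporal edge: tail, head, starting time and (positive) travel time. -/
structure TEdge (V : Type) where
  tail : V
  head : V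
  time : ℝ
  travel : ℝ

/-- A trip: a nonempty walk, i.e. consecutive edges match head-to-tail. -/
def IsWalk {V : Type} (T : List (DEdge V)) : Prop :=
  T ≠ [] ∧ T.Chain' fun e f => e.head = f.tail

/-- A trip network: every trip is a walk with positive weights, and every node
appears in some trip (the edges of `D` are exactly the edges of the trips). -/
def IsTripNetwork {V : Type} (trips : List (List (DEdge V))) : Prop :=
  (∀ T ∈ trips, IsWalk T ∧ ∀ e ∈ T, 0 < e.weight) ∧
  ∀ v : V, ∃ T ∈ trips, ∃ e ∈ T, e.tail = v ∨ e.head = v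

/-- A temporal path from `u` to `v` in the temporal graph `G`. -/
def IsTemporalPath {V : Type} (G : Set (TEdge V)) (p : List (TEdge V)) (u v : V) : Prop :=
  p ≠ [] ∧ (∀ f ∈ p, f ∈ G) ∧
  (p.Chain' fun e f => e.head = f.tail ∧ e.time + e.travel ≤ f.time) ∧
  p.head?.map TEdge.tail = some u ∧ p.getLast?.map TEdge.head = some v

/-- Temporal reachability (every node temporally reaches itself). -/
def TReachable {V : Type} (G : Set (TEdge V)) (u v : V) : Prop :=
  u = v ∨ ∃ p, IsTemporalPath G p u v

/-- The temporal edges induced by a trip with starting time `t`. -/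
def tripTEdges {V : Type} : List (DEdge V) → ℝ → List (TEdge V)
  | [], _ => []
  | e :: es, t => ⟨e.tail, e.head, t, e.weight⟩ :: tripTEdges es (t + e.weight)

/-- The temporal graph induced by a temporalisation `τ` assigning a starting
time to each trip (index) of the collection. -/
def inducedTG {V : Type} (trips : List (List (DEdge V))) (τ : ℕ → ℝ) : Set (TEdge V) :=
  { f | ∃ i : Fin trips.length, f ∈ tripTEdges (trips.get i) (τ i.1) }

/-- The duration of a trip: the sum of the weights of its edges. -/
def tripDuration {V : Type} (T : List (DEdge V)) : ℝ :=
  (T.map DEdge.weight).sum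

/-- Starting time of the `i`-th trip of a schedule: the sum of the durations of
the previous trips. -/
def scheduleTimes {V : Type} (S : List (List (DEdge V))) (i : ℕ) : ℝ :=
  ((S.take i).map tripDuration).sum

/-- The temporal graph induced by a schedule (an ordering of the trips). -/
def scheduleTG {V : Type} (S : List (List (DEdge V))) : Set (TEdge V) :=
  inducedTG S (scheduleTimes S)

/-- The number of ordered pairs `(u, v)` of nodes such that `v` is temporally
reachable from `u` in `G`. -/
noncomputable def reachCount {V : Type} [Fintype V] (G : Set (TEdge V)) : ℕ :=
  Nat.card {p : V × V // TReachable G p.1 p.2}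

/-- `(s,t)`-temporalisability. -/
def Temporalisable {V : Type} (trips : List (List (DEdge V))) (s t : V) : Prop :=
  ∃ τ : ℕ → ℝ, TReachable (inducedTG trips τ) s t

/-- Strong temporalisability. -/
def StronglyTemporalisable {V : Type} (trips : List (List (DEdge V))) : Prop :=
  ∀ s t : V, Temporalisable trips s t

/-- The sequence of nodes visited by a trip. -/
def tripNodes {V : Type} (T : List (DEdge V)) : List V :=
  T.map DEdge.tail ++ (T.getLast?.map DEdge.head).toList

/-- A symmetric trip collection: the trips can be grouped into disjoint pairs
`(T, T̄)` where `T̄` visits the same nodes as `T` in reverse order. -/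
def IsSymmetricTrips {V : Type} (trips : List (List (DEdge V))) : Prop :=
  ∃ ps : List (List (DEdge V) × List (DEdge V)),
    trips.Perm (ps.flatMap fun p => [p.1, p.2]) ∧
    ∀ p ∈ ps, tripNodes p.2 = (tripNodes p.1).reverse

/-- Reachability by a walk in the underlying multidigraph. -/
def DReachable {V : Type} (trips : List (List (DEdge V))) (u v : V) : Prop :=
  Relation.ReflTransGen (fun a b => ∃ T ∈ trips, ∃ e ∈ T, e.tail = a ∧ e.head = b) u v


lemma tripDuration_nonneg {V : Type} {T : List (DEdge V)} (h : ∀ e ∈ T, 0 < e.weight) :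
    0 ≤ tripDuration T := by
  apply List.sum_nonneg
  simp only [List.mem_map]
  rintro _ ⟨e, he, rfl⟩
  exact (h e he).le

lemma tripTEdges_bounds {V : Type} :
    ∀ (T : List (DEdge V)) (t : ℝ), (∀ e ∈ T, 0 < e.weight) →
    ∀ f ∈ tripTEdges T t, 0 < f.travel ∧ t ≤ f.time ∧ f.time + f.travel ≤ t + tripDuration T
  | [], t, _, f, hf => by simp [tripTEdges] at hf
  | e :: es, t, h, f, hf => by
    have hdc : tripDuration (e :: es) = e.weight + tripDuration es := by
      simp [tripDuration]
    simp only [tripTEdges, List.mem_cons] at hf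
    rcases hf with rfl | hf
    · refine ⟨h e (by simp), le_refl _, ?_⟩
      have h0 := tripDuration_nonneg (fun x hx => h x (List.mem_cons_of_mem _ hx))
      simp only [hdc]
      linarith
    · have hes : ∀ x ∈ es, 0 < x.weight := fun x hx => h x (List.mem_cons_of_mem _ hx)
      obtain ⟨h1, h2, h3⟩ := tripTEdges_bounds es (t + e.weight) hes f hf
      have hw := h e (by simp)
      exact ⟨h1, by linarith, by rw [hdc]; linarith⟩

lemma scheduleTimes_succ {V : Type} (S : List (List (DEdge V))) (i : ℕ) (hi : i < S.length) :
    scheduleTimes S (i + 1) = scheduleTimes S i + tripDuration (S.get ⟨i, hi⟩) := by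
  unfold scheduleTimes
  rw [List.map_take, List.map_take, List.take_succ, List.sum_append]
  simp [List.getElem?_map, List.getElem?_eq_getElem hi]

lemma scheduleTimes_mono {V : Type} (S : List (List (DEdge V)))
    (hpos : ∀ T ∈ S, ∀ e ∈ T, 0 < e.weight) : Monotone (scheduleTimes S) := by
  apply monotone_nat_of_le_succ
  intro n
  by_cases hn : n < S.length
  · rw [scheduleTimes_succ S n hn]
    have := tripDuration_nonneg (hpos _ (S.get_mem ⟨n, hn⟩))
    linarith
  · unfold scheduleTimes
    rw [List.take_succ]
    simp [List.getElem?_eq_none (le_of_not_gt hn)]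

lemma edge_bounds' {V : Type} {S : List (List (DEdge V))}
    (hpos : ∀ T ∈ S, ∀ e ∈ T, 0 < e.weight)
    {f : TEdge V} {i : Fin S.length}
    (hf : f ∈ tripTEdges (S.get i) (scheduleTimes S i.1)) :
    0 < f.travel ∧ scheduleTimes S i.1 ≤ f.time ∧
      f.time + f.travel ≤ scheduleTimes S (i.1 + 1) := by
  have h := tripTEdges_bounds _ _ (hpos _ (S.get_mem i)) f hf
  rw [scheduleTimes_succ S i.1 i.2]
  exact h

lemma time_strict {V : Type} {P : List (TEdge V)}
    (hchain : P.Chain' fun e f => e.head = f.tail ∧ e.time + e.travel ≤ f.time)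
    (htrav : ∀ f ∈ P, 0 < f.travel) :
    ∀ a b (hab : a < b) (hb : b < P.length),
      (P.get ⟨a, Nat.lt_trans hab hb⟩).time < (P.get ⟨b, hb⟩).time := by
  intro a b
  induction b with
  | zero => omega
  | succ b ih =>
    intro hab hb
    have hadj : (P.get ⟨b, by omega⟩).time + (P.get ⟨b, by omega⟩).travel ≤
        (P.get ⟨b + 1, hb⟩).time := by
      have := List.isChain_iff_getElem.mp hchain b (by omega)
      exact this.2
    have hb' : 0 < (P.get ⟨b, by omega⟩).travel := htrav _ (P.get_mem ⟨b, by omega⟩)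
    rcases Nat.lt_or_ge a b with h | h
    · have := ih h (by omega)
      linarith
    · have : a = b := by omega
      subst this
      linarith

/-- In the temporal graph induced by a schedule, the edges of a
temporal path appear in blocks, one block per trip, in the order given by the
schedule. -/
theorem schedule_path_no_interleaving
    {V : Type} (trips : List (List (DEdge V))) (hN : IsTripNetwork trips)
    (S : List (List (DEdge V))) (hS : S.Perm trips)
    (P : List (TEdge V)) (u v : V)
    (hP : IsTemporalPath (scheduleTG S) P u v) :
    (∀ (a b c : ℕ) (hab : a ≤ b) (hbc : b ≤ c) (hc : c < P.length) (i : Fin S.length),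
        P.get ⟨a, by omega⟩ ∈ tripTEdges (S.get i) (scheduleTimes S i.1) →
        P.get ⟨c, hc⟩ ∈ tripTEdges (S.get i) (scheduleTimes S i.1) →
        P.get ⟨b, by omega⟩ ∈ tripTEdges (S.get i) (scheduleTimes S i.1)) ∧
    (∀ (a b : ℕ) (hab : a < b) (hb : b < P.length) (i j : Fin S.length),
        P.get ⟨a, by omega⟩ ∈ tripTEdges (S.get i) (scheduleTimes S i.1) →
        P.get ⟨b, hb⟩ ∈ tripTEdges (S.get j) (scheduleTimes S j.1) →
        i ≠ j → i < j) := by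
  
  have hpos : ∀ T ∈ S, ∀ e ∈ T, 0 < e.weight := fun T hT => (hN.1 T (hS.subset hT)).2
  have htrav : ∀ f ∈ P, 0 < f.travel := by
    intro f hf
    obtain ⟨i, hfi⟩ := hP.2.1 f hf
    exact (edge_bounds' hpos hfi).1
  have hchain := hP.2.2.1
  have key : ∀ (a b : ℕ) (hab : a < b) (hb : b < P.length) (i j : Fin S.length),
      P.get ⟨a, by omega⟩ ∈ tripTEdges (S.get i) (scheduleTimes S i.1) →
      P.get ⟨b, hb⟩ ∈ tripTEdges (S.get j) (scheduleTimes S j.1) → i ≠ j → i < j := by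
    intro a b hab hb i j hi hj hij
    by_contra h
    have hji : j.1 < i.1 := lt_of_le_of_ne (Fin.le_def.mp (not_lt.mp h)) (fun e => hij (Fin.ext e.symm))
    obtain ⟨ta, tb, tc⟩ := edge_bounds' hpos hi
    obtain ⟨ta', tb', tc'⟩ := edge_bounds' hpos hj
    have hmono := scheduleTimes_mono S hpos (show j.1 + 1 ≤ i.1 from hji)
    have hlt := time_strict hchain htrav a b hab hb
    linarith
  refine ⟨?_, fun a b hab => key a b hab⟩
  intro a b c hab hbc hc i ha hcin
  obtain ⟨j, hj⟩ := hP.2.1 _ (P.get_mem ⟨b, by omega⟩)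
  rcases eq_or_lt_of_le hab with rfl | hab'
  · exact ha
  rcases eq_or_lt_of_le hbc with rfl | hbc'
  · exact hcin
  by_cases hij : i = j
  · exact hij ▸ hj
  · exact absurd (key a b hab' (by omega) i j ha hj hij)
      (fun h1 => absurd (key b c hbc' hc j i hj hcin (fun e => hij e.symm)) (by omega))
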